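/- Let R be a ring with local units, P a locally projective unitary left R-module, and S a subring of End_R(P) such that P is a unitary right S-module, S·End_R(P) = S, and Pf is a finitely generated left R-module for every idempotent f ∈ S. Let N be a unitary left R-module with st_P(N) = 0. Then: (a) Hom_R(X,N) = 0 for every unitary left R-module X with SHom_R(P,X) = 0; (b) if N is an injective object in RMod, then the evaluation morphism γ_N : N → RHom_S(G_P, SHom_R(P,N)) is an isomorphism. -/

import Mathlib

set_option linter.unusedVariables false

/-! ### Core: non-unital rings with local units, modules, homomorphisms, categories -/

universe u v w

open MulOpposite CategoryTheory

/-- A ring with local units: every finite subset is contained in a subring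
of the form `eRe` for an idempotent `e`; equivalently, every finite subset
admits an idempotent acting as a two-sided identity on it. -/
class HasLocalUnits (R : Type u) [NonUnitalRing R] : Prop where
  exists_unit : ∀ s : Finset R, ∃ e : R, e * e = e ∧ ∀ x ∈ s, e * x = x ∧ x * e = x

/-- A (left) module over a non-unital ring. -/
class LMod (R : Type u) [NonUnitalRing R] (M : Type v) [AddCommGroup M] extends SMul R M where
  smul_add' : ∀ (r : R) (m n : M), r • (m + n) = r • m + r • n
  add_smul' : ∀ (r s : R) (m : M), (r + s) • m = r • m + s • m
  mul_smul' : ∀ (r s : R) (m : M), (r * s) • m = r • (s • m)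

section basic
variable {R : Type u} [NonUnitalRing R] {M : Type v} [AddCommGroup M] [LMod R M]

theorem LMod.smul_zero' (r : R) : r • (0 : M) = 0 := by
  have h := LMod.smul_add' r (0 : M) 0
  rw [add_zero] at h
  have h2 : r • (0 : M) + r • (0 : M) = r • (0 : M) + 0 := by rw [← h, add_zero]
  exact add_left_cancel h2

theorem LMod.zero_smul' (m : M) : (0 : R) • m = 0 := by
  have h := LMod.add_smul' (0 : R) 0 m
  rw [add_zero] at h
  have h2 : (0 : R) • m + (0 : R) • m = (0 : R) • m + 0 := by rw [← h, add_zero]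
  exact add_left_cancel h2

theorem LMod.smul_neg' (r : R) (m : M) : r • (-m) = -(r • m) := by
  have h : r • m + r • (-m) = 0 := by
    rw [← LMod.smul_add' r m (-m), add_neg_cancel, LMod.smul_zero']
  exact eq_neg_of_add_eq_zero_right h

end basic

/-- `f : M → N` is a homomorphism of (non-unital) `R`-modules. -/
structure IsLHom (R : Type u) [NonUnitalRing R] {M : Type v} {N : Type w}
    [AddCommGroup M] [AddCommGroup N] [LMod R M] [LMod R N] (f : M → N) : Prop where
  map_add : ∀ x y, f (x + y) = f x + f y
  map_smul : ∀ (r : R) (x : M), f (r • x) = r • f x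

theorem IsLHom.map_zero {R : Type u} [NonUnitalRing R] {M : Type v} {N : Type w}
    [AddCommGroup M] [AddCommGroup N] [LMod R M] [LMod R N] {f : M → N}
    (hf : IsLHom R f) : f 0 = 0 := by
  have h := hf.map_add 0 0
  rw [add_zero] at h
  have h2 : f 0 + f 0 = f 0 + 0 := by rw [← h, add_zero]
  exact add_left_cancel h2

theorem IsLHom.map_neg {R : Type u} [NonUnitalRing R] {M : Type v} {N : Type w}
    [AddCommGroup M] [AddCommGroup N] [LMod R M] [LMod R N] {f : M → N}
    (hf : IsLHom R f) (x : M) : f (-x) = -(f x) := by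
  have h : f x + f (-x) = 0 := by rw [← hf.map_add, add_neg_cancel, hf.map_zero]
  exact eq_neg_of_add_eq_zero_right h

/-- The type of homomorphisms of (non-unital) `R`-modules. -/
def LinMap (R : Type u) [NonUnitalRing R] (M : Type v) (N : Type w)
    [AddCommGroup M] [AddCommGroup N] [LMod R M] [LMod R N] : Type (max v w) :=
  {f : M → N // IsLHom R f}

namespace LinMap

variable {R : Type u} [NonUnitalRing R] {M : Type v} {N : Type w}
    [AddCommGroup M] [AddCommGroup N] [LMod R M] [LMod R N]

theorem ext {f g : LinMap R M N} (h : f.1 = g.1) : f = g := Subtype.ext h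

instance : Add (LinMap R M N) :=
  ⟨fun f g => ⟨fun x => f.1 x + g.1 x,
    ⟨fun x y => by rw [f.2.map_add, g.2.map_add]; abel,
     fun r x => by rw [f.2.map_smul, g.2.map_smul, LMod.smul_add']⟩⟩⟩

instance : Zero (LinMap R M N) :=
  ⟨⟨fun _ => 0, ⟨fun _ _ => by rw [add_zero], fun r _ => (LMod.smul_zero' r).symm⟩⟩⟩

instance : Neg (LinMap R M N) :=
  ⟨fun f => ⟨fun x => -(f.1 x),
    ⟨fun x y => by rw [f.2.map_add]; abel,
     fun r x => by rw [f.2.map_smul, LMod.smul_neg']⟩⟩⟩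

instance : AddCommGroup (LinMap R M N) where
  add_assoc f g h := ext (funext fun x => add_assoc _ _ _)
  zero_add f := ext (funext fun x => zero_add _)
  add_zero f := ext (funext fun x => add_zero _)
  add_comm f g := ext (funext fun x => add_comm _ _)
  neg_add_cancel f := ext (funext fun x => neg_add_cancel _)
  nsmul := nsmulRec
  zsmul := zsmulRec

@[simp] theorem add_apply (f g : LinMap R M N) (x : M) : (f + g).1 x = f.1 x + g.1 x := rfl
@[simp] theorem zero_apply (x : M) : (0 : LinMap R M N).1 x = 0 := rfl
@[simp] theorem neg_apply (f : LinMap R M N) (x : M) : (-f).1 x = -(f.1 x) := rfl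

end LinMap

/-- The endomorphism ring of a module over a non-unital ring, with the
"diagrammatic" multiplication `(f * g) x = g (f x)` (i.e. `f * g` means
"first `f`, then `g`", matching homomorphisms written on the right). -/
instance LinMap.instNonUnitalRing {R : Type u} [NonUnitalRing R] {M : Type v}
    [AddCommGroup M] [LMod R M] : NonUnitalRing (LinMap R M M) :=
  { (inferInstance : AddCommGroup (LinMap R M M)) with
    mul := fun f g => ⟨fun x => g.1 (f.1 x),
      ⟨fun x y => by rw [f.2.map_add, g.2.map_add], fun r x => by rw [f.2.map_smul, g.2.map_smul]⟩⟩
    left_distrib := fun f g h => LinMap.ext (funext fun x => rfl)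
    right_distrib := fun f g h => LinMap.ext (funext fun x => h.2.map_add _ _)
    zero_mul := fun f => LinMap.ext (funext fun x => f.2.map_zero)
    mul_zero := fun f => LinMap.ext (funext fun x => rfl)
    mul_assoc := fun f g h => LinMap.ext (funext fun x => rfl) }

@[simp] theorem LinMap.mul_apply {R : Type u} [NonUnitalRing R] {M : Type v}
    [AddCommGroup M] [LMod R M] (f g : LinMap R M M) (x : M) : (f * g).1 x = g.1 (f.1 x) := rfl

/-- A module `M` over a non-unital ring `R` is unitary if `RM = M`. -/
def IsUnitary (R : Type u) [NonUnitalRing R] (M : Type v) [AddCommGroup M] [LMod R M] : Prop :=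
  ∀ m : M, m ∈ AddSubgroup.closure {x : M | ∃ (r : R) (n : M), x = r • n}

/-- The `R`-submodule (as an additive subgroup) generated by a subset. -/
def lspan (R : Type u) [NonUnitalRing R] {M : Type v} [AddCommGroup M] [LMod R M]
    (X : Set M) : AddSubgroup M :=
  AddSubgroup.closure (X ∪ {m | ∃ (r : R) (x : M), x ∈ X ∧ m = r • x})

/-- A subset `A` of a module is finitely generated (as an `R`-submodule). -/
def IsFGSet (R : Type u) [NonUnitalRing R] {M : Type v} [AddCommGroup M] [LMod R M]
    (A : Set M) : Prop :=
  ∃ s : Finset M, (↑s : Set M) ⊆ A ∧ ∀ a ∈ A, a ∈ lspan R (↑s : Set M)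

/-- A finitely generated module over a non-unital ring. -/
def IsFG (R : Type u) [NonUnitalRing R] (M : Type v) [AddCommGroup M] [LMod R M] : Prop :=
  ∃ s : Finset M, ∀ m : M, m ∈ lspan R (↑s : Set M)

/-- The category of unitary left modules over a ring with local units
(objects: unitary left `R`-modules). -/
structure UMod (R : Type u) [NonUnitalRing R] : Type (max u (v + 1)) where
  carrier : Type v
  [grp : AddCommGroup carrier]
  [mod : LMod R carrier]
  unitary : IsUnitary R carrier

attribute [instance] UMod.grp UMod.mod

instance {R : Type u} [NonUnitalRing R] : CoeSort (UMod.{u, v} R) (Type v) := ⟨UMod.carrier⟩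

instance UMod.instCategory {R : Type u} [NonUnitalRing R] : Category (UMod.{u, v} R) where
  Hom M N := LinMap R M.carrier N.carrier
  id M := ⟨fun x => x, ⟨fun _ _ => rfl, fun _ _ => rfl⟩⟩
  comp f g := ⟨fun x => g.1 (f.1 x),
    ⟨fun x y => by rw [f.2.map_add, g.2.map_add], fun r x => by rw [f.2.map_smul, g.2.map_smul]⟩⟩
  id_comp f := LinMap.ext rfl
  comp_id f := LinMap.ext rfl
  assoc f g h := LinMap.ext rfl

@[simp] theorem UMod.comp_apply {R : Type u} [NonUnitalRing R] {M N K : UMod.{u, v} R}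
    (f : M ⟶ N) (g : N ⟶ K) (x : M.carrier) : (f ≫ g).1 x = g.1 (f.1 x) := rfl

@[simp] theorem UMod.id_apply {R : Type u} [NonUnitalRing R] {M : UMod.{u, v} R}
    (x : M.carrier) : (𝟙 M : M ⟶ M).1 x = x := rfl

instance UMod.instPreadditive {R : Type u} [NonUnitalRing R] :
    Preadditive (UMod.{u, v} R) where
  homGroup M N := inferInstanceAs (AddCommGroup (LinMap R M.carrier N.carrier))
  add_comp M N K f f' g := LinMap.ext (funext fun x => g.2.map_add _ _)
  comp_add M N K f g g' := LinMap.ext (funext fun x => rfl)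

/-- A unitary module `P` is a generator of the category of unitary left `R`-modules. -/
def IsGenerator (R : Type u) [NonUnitalRing R] (P : UMod.{u, v} R) : Prop :=
  ∀ (M B : UMod.{u, v} R) (f g : M ⟶ B), f ≠ g → ∃ h : P ⟶ M, h ≫ f ≠ h ≫ g

/-- A set of unitary modules is a cogenerating set for the category of
unitary left `R`-modules. -/
def IsCogenSet (R : Type u) [NonUnitalRing R] (𝒰 : Set (UMod.{u, v} R)) : Prop :=
  ∀ (B M : UMod.{u, v} R) (f g : B ⟶ M), f ≠ g → ∃ U' ∈ 𝒰, ∃ h : M ⟶ U', f ≫ h ≠ g ≫ h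
/-! ### The largest unitary submodule `C·H` of a module `H`, and induced
module structures on hom-groups -/

section umax

variable (C : Type u) [NonUnitalRing C] (H : Type v) [AddCommGroup H] [LMod C H]

/-- `C·H`, the largest unitary `C`-submodule of the `C`-module `H`. -/
def umax : AddSubgroup H :=
  AddSubgroup.closure {h : H | ∃ (c : C) (h' : H), h = c • h'}

variable {C H}

theorem smul_mem_umax (c : C) (h : H) : c • h ∈ umax C H :=
  AddSubgroup.subset_closure ⟨c, h, rfl⟩

/-- An additive, `C`-equivariant map carries `C·H` into `C·H'`. -/
theorem umax_mapsTo {H' : Type w} [AddCommGroup H'] [LMod C H'] (T : H → H')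
    (hadd : ∀ x y, T (x + y) = T x + T y) (hsmul : ∀ (c : C) (x : H), T (c • x) = c • T x)
    {h : H} (hh : h ∈ umax C H) : T h ∈ umax C H' := by
  have hT : IsLHom C T := ⟨hadd, hsmul⟩
  induction hh using AddSubgroup.closure_induction with
  | mem x hx =>
    obtain ⟨c, h', rfl⟩ := hx
    rw [hsmul]; exact smul_mem_umax c (T h')
  | zero => rw [hT.map_zero]; exact (umax C H').zero_mem
  | add x y hx hy ihx ihy => rw [hadd]; exact (umax C H').add_mem ihx ihy
  | neg x hx ihx => rw [hT.map_neg]; exact (umax C H').neg_mem ihx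

instance umax.instLMod : LMod C ↥(umax C H) where
  smul c h := ⟨c • h.1, smul_mem_umax c h.1⟩
  smul_add' c m n := Subtype.ext (LMod.smul_add' c m.1 n.1)
  add_smul' c c' m := Subtype.ext (LMod.add_smul' c c' m.1)
  mul_smul' c c' m := Subtype.ext (LMod.mul_smul' c c' m.1)

@[simp] theorem umax.smul_coe (c : C) (h : ↥(umax C H)) : (c • h).1 = c • h.1 := rfl

/-- If a second ring `D` acts on `H` commuting with the `C`-action,
then `C·H` is stable under the `D`-action. -/
theorem umax_stable {D : Type w} [NonUnitalRing D] [LMod D H] [SMulCommClass C D H]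
    (d : D) {h : H} (hh : h ∈ umax C H) : d • h ∈ umax C H :=
  umax_mapsTo (fun x => d • x) (fun x y => LMod.smul_add' d x y)
    (fun c x => (smul_comm c d x).symm) hh

instance umax.instLMod₂ {D : Type w} [NonUnitalRing D] [LMod D H] [SMulCommClass C D H] :
    LMod D ↥(umax C H) where
  smul d h := ⟨d • h.1, umax_stable d h.2⟩
  smul_add' d m n := Subtype.ext (LMod.smul_add' d m.1 n.1)
  add_smul' d d' m := Subtype.ext (LMod.add_smul' d d' m.1)
  mul_smul' d d' m := Subtype.ext (LMod.mul_smul' d d' m.1)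

instance umax.instSMulCommClass {D : Type w} [NonUnitalRing D] [LMod D H]
    [SMulCommClass C D H] : SMulCommClass C D ↥(umax C H) :=
  ⟨fun c d h => Subtype.ext (smul_comm c d h.1)⟩

/-- If `C` has local units, then `C·H` is a unitary `C`-module. -/
theorem umax_unitary [HasLocalUnits C] : IsUnitary C ↥(umax C H) := by
  intro m
  obtain ⟨h, hh⟩ := m
  induction hh using AddSubgroup.closure_induction with
  | mem x hx =>
    obtain ⟨c, h', rfl⟩ := hx
    obtain ⟨e, he, hec⟩ := HasLocalUnits.exists_unit {c}
    have hc := (hec c (Finset.mem_singleton_self c)).1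
    refine AddSubgroup.subset_closure ⟨e, ⟨c • h', smul_mem_umax c h'⟩, ?_⟩
    refine Subtype.ext ?_
    show c • h' = e • (c • h')
    rw [← LMod.mul_smul', hc]
  | zero =>
    have : (⟨(0 : H), (umax C H).zero_mem⟩ : ↥(umax C H)) = 0 := rfl
    rw [this]; exact AddSubgroup.zero_mem _
  | add x y hx hy ihx ihy =>
    have : (⟨x + y, (umax C H).add_mem hx hy⟩ : ↥(umax C H)) =
        ⟨x, hx⟩ + ⟨y, hy⟩ := rfl
    rw [this]; exact AddSubgroup.add_mem _ ihx ihy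
  | neg x hx ihx =>
    have : (⟨-x, (umax C H).neg_mem hx⟩ : ↥(umax C H)) = -⟨x, hx⟩ := rfl
    rw [this]; exact AddSubgroup.neg_mem _ ihx

end umax

section regular

variable (R : Type u) [NonUnitalRing R]

/-- The left regular module structure of a non-unital ring on itself. -/
instance NonUnitalRing.instLModSelf : LMod R R where
  smul := (· * ·)
  smul_add' := mul_add
  add_smul' := add_mul
  mul_smul' := mul_assoc

@[simp] theorem NonUnitalRing.smul_def (r s : R) : r • s = r * s := rfl

/-- The right regular module structure, as a left module over the opposite ring. -/
instance NonUnitalRing.instLModSelfOp : LMod Rᵐᵒᵖ R where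
  smul r s := s * r.unop
  smul_add' r m n := add_mul m n r.unop
  add_smul' r r' m := mul_add m r.unop r'.unop
  mul_smul' r r' m := (mul_assoc m r'.unop r.unop).symm

@[simp] theorem NonUnitalRing.op_smul_def (r : Rᵐᵒᵖ) (s : R) : r • s = s * r.unop := rfl

instance : SMulCommClass R Rᵐᵒᵖ R :=
  ⟨fun r s x => by
    show r * (x * s.unop) = (r * x) * s.unop
    rw [mul_assoc]⟩

/-- Local units pass to the opposite ring. -/
instance instHasLocalUnitsOp [HasLocalUnits R] : HasLocalUnits Rᵐᵒᵖ where
  exists_unit s := by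
    classical
    obtain ⟨e, he, h⟩ := HasLocalUnits.exists_unit (R := R) (s.image MulOpposite.unop)
    refine ⟨MulOpposite.op e, by rw [← MulOpposite.op_mul, he], fun x hx => ?_⟩
    have hx' := h x.unop (Finset.mem_image_of_mem MulOpposite.unop hx)
    constructor
    · conv_lhs => rw [← MulOpposite.op_unop x, ← MulOpposite.op_mul, hx'.2, MulOpposite.op_unop]
    · conv_lhs => rw [← MulOpposite.op_unop x, ← MulOpposite.op_mul, hx'.1, MulOpposite.op_unop]

end regular

section homact

variable {A B C : Type u} [NonUnitalRing A] [NonUnitalRing B] [NonUnitalRing C]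
variable {X : Type v} {Y : Type w} [AddCommGroup X] [AddCommGroup Y] [LMod B X] [LMod B Y]

/-- The action of `A` on `Hom_B(X, Y)` by precomposition with the right
`A`-action on `X` (homomorphisms written on the right: `(a • f) x = f (x·a)`). -/
instance LinMap.instLModPre [LMod Aᵐᵒᵖ X] [SMulCommClass B Aᵐᵒᵖ X] :
    LMod A (LinMap B X Y) where
  smul a f := ⟨fun x => f.1 (op a • x),
    ⟨fun x y => by rw [LMod.smul_add', f.2.map_add],
     fun r x => by rw [← smul_comm r (op a) x, f.2.map_smul]⟩⟩
  smul_add' a f g := LinMap.ext rfl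
  add_smul' a a' f := LinMap.ext (funext fun x => by
    show f.1 (op (a + a') • x) = f.1 (op a • x) + f.1 (op a' • x)
    rw [← f.2.map_add, ← LMod.add_smul']
    rfl)
  mul_smul' a a' f := LinMap.ext (funext fun x => by
    show f.1 (op (a * a') • x) = f.1 (op a' • (op a • x))
    rw [← LMod.mul_smul']
    rfl)

theorem LinMap.pre_smul_apply [LMod Aᵐᵒᵖ X] [SMulCommClass B Aᵐᵒᵖ X]
    (a : A) (f : LinMap B X Y) (x : X) : (a • f).1 x = f.1 (op a • x) := rfl

/-- The action of `C` on `Hom_B(X, Y)` by postcomposition with a commuting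
`C`-action on `Y`. -/
instance LinMap.instLModPost [LMod C Y] [SMulCommClass B C Y] :
    LMod C (LinMap B X Y) where
  smul c f := ⟨fun x => c • f.1 x,
    ⟨fun x y => by rw [f.2.map_add, LMod.smul_add'],
     fun r x => by rw [f.2.map_smul]; exact (smul_comm r c (f.1 x)).symm⟩⟩
  smul_add' c f g := LinMap.ext (funext fun x => LMod.smul_add' c (f.1 x) (g.1 x))
  add_smul' c c' f := LinMap.ext (funext fun x => LMod.add_smul' c c' (f.1 x))
  mul_smul' c c' f := LinMap.ext (funext fun x => LMod.mul_smul' c c' (f.1 x))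

theorem LinMap.post_smul_apply [LMod C Y] [SMulCommClass B C Y]
    (c : C) (f : LinMap B X Y) (x : X) : (c • f).1 x = c • (f.1 x) := rfl

/-- Pre- and postcomposition actions on hom-groups commute. -/
instance LinMap.instSMulCommClassPrePost [LMod Aᵐᵒᵖ X] [SMulCommClass B Aᵐᵒᵖ X]
    [LMod C Y] [SMulCommClass B C Y] : SMulCommClass A C (LinMap B X Y) :=
  ⟨fun a c f => LinMap.ext rfl⟩

end homact
/-! ### Split direct systems and direct limits of unitary modules -/

section dirsys

variable (R : Type u) [NonUnitalRing R]

/-- A split direct system of unitary left `R`-modules, indexed by a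
quasi-ordered set `(ι, rel)`: a direct system `(P_i, φ_{ij})` together with
splittings `ψ_{ji} : P_j → P_i` (for `i ≤ j`) such that `φ_{ij} ψ_{ji} = id`
and `ψ_{kj} ψ_{ji} = ψ_{ki}`. -/
structure SplitSystem (ι : Type w) (rel : ι → ι → Prop) : Type (max u w (v + 1)) where
  obj : ι → UMod.{u, v} R
  map : ∀ {i j : ι}, rel i j → (obj i ⟶ obj j)
  split : ∀ {i j : ι}, rel i j → (obj j ⟶ obj i)
  map_self : ∀ {i : ι} (h : rel i i) (x : (obj i).carrier), (map h).1 x = x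
  map_map : ∀ {i j k : ι} (hij : rel i j) (hjk : rel j k) (hik : rel i k)
    (x : (obj i).carrier), (map hjk).1 ((map hij).1 x) = (map hik).1 x
  split_map : ∀ {i j : ι} (h : rel i j) (x : (obj i).carrier),
    (split h).1 ((map h).1 x) = x
  split_split : ∀ {i j k : ι} (hij : rel i j) (hjk : rel j k) (hik : rel i k)
    (x : (obj k).carrier), (split hij).1 ((split hjk).1 x) = (split hik).1 x

/-- `P`, together with homomorphisms `φ_i : P_i → P`, is a direct limit of the
direct system `(P_i, φ_{ij})` (with directed index set): the `φ_i` are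
compatible, every element of `P` comes from some `P_i`, and everything killed
by `φ_i` is eventually killed in the system. -/
structure LimitCocone {ι : Type w} {rel : ι → ι → Prop} (D : SplitSystem.{u, v} R ι rel)
    (P : Type v) [AddCommGroup P] [LMod R P] : Type (max u w v) where
  incl : ∀ i, LinMap R (D.obj i).carrier P
  compat : ∀ {i j : ι} (h : rel i j) (x : (D.obj i).carrier),
    (incl j).1 ((D.map h).1 x) = (incl i).1 x
  exhaustive : ∀ x : P, ∃ (i : ι) (y : (D.obj i).carrier), (incl i).1 y = x
  eventually_zero : ∀ i (y : (D.obj i).carrier), (incl i).1 y = 0 →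
    ∃ j, ∃ h : rel i j, (D.map h).1 y = 0

/-- A unitary left `R`-module is locally projective if it is a direct limit of a
split direct system of finitely generated projective unitary left `R`-modules. -/
def IsLocallyProjective (P : Type v) [AddCommGroup P] [LMod R P] : Prop :=
  ∃ (ι : Type v) (rel : ι → ι → Prop),
    (∀ i, rel i i) ∧ (∀ {i j k}, rel i j → rel j k → rel i k) ∧
    Nonempty ι ∧ (∀ i j, ∃ k, rel i k ∧ rel j k) ∧
    ∃ (D : SplitSystem.{u, v} R ι rel) (_ : LimitCocone R D P),
      ∀ i, IsFG R (D.obj i).carrier ∧ CategoryTheory.Projective (D.obj i)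

variable {R}

/-- The transition maps `Ω_{ij} : End_R(P_i) → End_R(P_j)`, `α ↦ ψ_{ji} α φ_{ij}`,
of the direct system of endomorphism rings associated to a split direct system. -/
def SplitSystem.endTrans {ι : Type w} {rel : ι → ι → Prop}
    (D : SplitSystem.{u, v} R ι rel) {i j : ι} (h : rel i j)
    (a : LinMap R (D.obj i).carrier (D.obj i).carrier) :
    LinMap R (D.obj j).carrier (D.obj j).carrier :=
  ⟨fun x => (D.map h).1 (a.1 ((D.split h).1 x)),
   ⟨fun x y => by rw [(D.split h).2.map_add, a.2.map_add, (D.map h).2.map_add],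
    fun r x => by rw [(D.split h).2.map_smul, a.2.map_smul, (D.map h).2.map_smul]⟩⟩

end dirsys
/-! ### The functor `SHom_R(P,−)` and related constructions for a bimodule `P` -/

section shom

variable (R S : Type u) [NonUnitalRing R] [NonUnitalRing S]
variable (P : Type u) [AddCommGroup P] [LMod R P] [LMod Sᵐᵒᵖ P] [SMulCommClass R Sᵐᵒᵖ P]

/-- `SHom_R(P,M) = S·Hom_R(P,M)`, the largest unitary left `S`-submodule of
`Hom_R(P,M)`, as a type. -/
abbrev SHom (M : Type u) [AddCommGroup M] [LMod R M] : Type u :=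
  ↥(umax S (LinMap R P M))

variable {R S P}

/-- The action of `SHom_R(P,−)` on a homomorphism `g : M → N` (postcomposition). -/
def sHomMap {M N : Type u} [AddCommGroup M] [AddCommGroup N] [LMod R M] [LMod R N]
    (g : LinMap R M N) (α : SHom R S P M) : SHom R S P N :=
  ⟨⟨fun x => g.1 (α.1.1 x),
    ⟨fun x y => by rw [α.1.2.map_add, g.2.map_add],
     fun r x => by rw [α.1.2.map_smul, g.2.map_smul]⟩⟩,
   umax_mapsTo (C := S)
     (fun f => ⟨fun x => g.1 (f.1 x),
       ⟨fun x y => by rw [f.2.map_add, g.2.map_add],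
        fun r x => by rw [f.2.map_smul, g.2.map_smul]⟩⟩)
     (fun f f' => LinMap.ext (funext fun x => g.2.map_add _ _))
     (fun s f => LinMap.ext rfl) α.2⟩

theorem sHomMap_apply {M N : Type u} [AddCommGroup M] [AddCommGroup N] [LMod R M]
    [LMod R N] (g : LinMap R M N) (α : SHom R S P M) (x : P) :
    ((sHomMap g α).1).1 x = g.1 (α.1.1 x) := rfl

theorem sHomMap_add {M N : Type u} [AddCommGroup M] [AddCommGroup N] [LMod R M]
    [LMod R N] (g : LinMap R M N) (α β : SHom R S P M) :
    sHomMap g (α + β) = sHomMap g α + sHomMap g β :=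
  Subtype.ext (LinMap.ext (funext fun x =>
    show g.1 (α.1.1 x + β.1.1 x) = g.1 (α.1.1 x) + g.1 (β.1.1 x) from g.2.map_add _ _))

theorem sHomMap_smul {M N : Type u} [AddCommGroup M] [AddCommGroup N] [LMod R M]
    [LMod R N] (g : LinMap R M N) (s : S) (α : SHom R S P M) :
    sHomMap g (s • α) = s • sHomMap g α :=
  Subtype.ext (LinMap.ext (funext fun x => rfl))

/-- `SHom_R(P,g)` as a homomorphism of `S`-modules. -/
def sHomLin {M N : Type u} [AddCommGroup M] [AddCommGroup N] [LMod R M] [LMod R N]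
    (g : LinMap R M N) : LinMap S (SHom R S P M) (SHom R S P N) :=
  ⟨sHomMap g, ⟨sHomMap_add g, fun s α => sHomMap_smul g s α⟩⟩

variable (R S P)

/-- The functor `SHom_R(P,−)` from unitary left `R`-modules to unitary left
`S`-modules. -/
def sHomF [HasLocalUnits S] : UMod.{u, u} R ⥤ UMod.{u, u} S where
  obj M := ⟨SHom R S P M.carrier, umax_unitary⟩
  map g := sHomLin g
  map_id M := LinMap.ext (funext fun α => Subtype.ext (LinMap.ext (funext fun x => rfl)))
  map_comp f g := LinMap.ext (funext fun α => Subtype.ext (LinMap.ext (funext fun x => rfl)))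

/-- `G_P = SHom_R(P,R)`, an `S`-`R`-bimodule. -/
abbrev GP : Type u := ↥(umax S (LinMap R P R))

/-- `RHom_S(G_P, N) = R·Hom_S(G_P, N)`, as a type. -/
abbrev RHomG (N : Type u) [AddCommGroup N] [LMod S N] : Type u :=
  ↥(umax R (LinMap S (GP R S P) N))

variable {R S P}

/-- The action of `RHom_S(G_P,−)` on a homomorphism of `S`-modules. -/
def rHomGMap {N N' : Type u} [AddCommGroup N] [AddCommGroup N'] [LMod S N] [LMod S N']
    (g : LinMap S N N') (α : RHomG R S P N) : RHomG R S P N' :=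
  ⟨⟨fun β => g.1 (α.1.1 β),
    ⟨fun x y => by rw [α.1.2.map_add, g.2.map_add],
     fun s x => by rw [α.1.2.map_smul, g.2.map_smul]⟩⟩,
   umax_mapsTo (C := R)
     (fun f => ⟨fun β => g.1 (f.1 β),
       ⟨fun x y => by rw [f.2.map_add, g.2.map_add],
        fun s x => by rw [f.2.map_smul, g.2.map_smul]⟩⟩)
     (fun f f' => LinMap.ext (funext fun β => g.2.map_add _ _))
     (fun r f => LinMap.ext rfl) α.2⟩

variable (R S P)

/-- The functor `RHom_S(G_P,−)` from unitary left `S`-modules to unitary left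
`R`-modules. -/
def rHomGF [HasLocalUnits R] : UMod.{u, u} S ⥤ UMod.{u, u} R where
  obj N := ⟨RHomG R S P N.carrier, umax_unitary⟩
  map g := ⟨rHomGMap g,
    ⟨fun α β => Subtype.ext (LinMap.ext (funext fun x =>
       show g.1 (α.1.1 x + β.1.1 x) = g.1 (α.1.1 x) + g.1 (β.1.1 x) from g.2.map_add _ _)),
     fun r α => Subtype.ext (LinMap.ext (funext fun x => rfl))⟩⟩
  map_id N := LinMap.ext (funext fun α => Subtype.ext (LinMap.ext (funext fun x => rfl)))
  map_comp f g := LinMap.ext (funext fun α => Subtype.ext (LinMap.ext (funext fun x => rfl)))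

variable {R S P}

/-- The inner component of the evaluation map `γ`: for `n ∈ N` and
`β ∈ Hom_R(P,R)`, the homomorphism `P → N`, `x ↦ (x)β·n`. -/
def gammaInner {N : Type u} [AddCommGroup N] [LMod R N] (n : N) (β : LinMap R P R) :
    LinMap R P N :=
  ⟨fun x => (β.1 x) • n,
   ⟨fun x y => by rw [β.2.map_add, LMod.add_smul'],
    fun r x => by rw [β.2.map_smul, NonUnitalRing.smul_def, LMod.mul_smul']⟩⟩

theorem gammaInner_mem {N : Type u} [AddCommGroup N] [LMod R N] (n : N)
    {β : LinMap R P R} (hβ : β ∈ umax S (LinMap R P R)) :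
    gammaInner n β ∈ umax S (LinMap R P N) :=
  umax_mapsTo (C := S) (fun β => gammaInner n β)
    (fun β β' => LinMap.ext (funext fun x => LMod.add_smul' _ _ _))
    (fun s β => LinMap.ext rfl) hβ

variable (R S P)

/-- The evaluation map `γ_N : N → RHom_S(G_P, SHom_R(P,N))` (before checking that
its values lie in the unitary part `R·Hom_S(G_P, SHom_R(P,N))`):
`n ↦ (β ↦ (x ↦ (x)β·n))`. -/
def gammaFun (N : Type u) [AddCommGroup N] [LMod R N] (n : N) :
    LinMap S (GP R S P) (SHom R S P N) :=
  ⟨fun β => ⟨gammaInner n β.1, gammaInner_mem n β.2⟩,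
   ⟨fun β β' => Subtype.ext (LinMap.ext (funext fun x => LMod.add_smul' _ _ _)),
    fun s β => Subtype.ext (LinMap.ext rfl)⟩⟩

/-- The `s`-trace `sTr(P,M) = Σ_{g ∈ SHom_R(P,M)} Im g` of `P` in `M`. -/
def sTrSub (M : Type u) [AddCommGroup M] [LMod R M] : AddSubgroup M :=
  AddSubgroup.closure {m : M | ∃ f : LinMap R P M, f ∈ umax S (LinMap R P M) ∧ ∃ x : P, m = f.1 x}

/-- `st_P(M) = 0`: the only `R`-submodule `K ⊆ M` with `SHom_R(P,K) = 0` is the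
zero submodule (equivalently, the sum of all such submodules is zero). -/
def stPZero (M : Type u) [AddCommGroup M] [LMod R M] : Prop :=
  ∀ K : AddSubgroup M, (∀ (r : R) (x : M), x ∈ K → r • x ∈ K) →
    (∀ (s : S) (f : LinMap R P M), (∀ x : P, f.1 x ∈ K) → s • f = 0) →
    ∀ m ∈ K, m = 0

/-- `SHom_R(P,X) = 0`. -/
def sHomZero (X : Type u) [AddCommGroup X] [LMod R X] : Prop :=
  ∀ f : LinMap R P X, f ∈ umax S (LinMap R P X) → f = 0

end shom
/-! ### Bimodules, dual hom functors, reflexivity, Morita duality bimodules,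
finiteness conditions -/

section bimod

variable (R S : Type u) [NonUnitalRing R] [NonUnitalRing S]

/-- A bundled `R`-`S`-bimodule over non-unital rings. -/
structure BimodLU : Type (u + 1) where
  carrier : Type u
  [grp : AddCommGroup carrier]
  [lmod : LMod R carrier]
  [rmod : LMod Sᵐᵒᵖ carrier]
  [comm : SMulCommClass R Sᵐᵒᵖ carrier]
  [comm' : SMulCommClass Sᵐᵒᵖ R carrier]

attribute [instance] BimodLU.grp BimodLU.lmod BimodLU.rmod BimodLU.comm BimodLU.comm'

variable (U : Type u) [AddCommGroup U] [LMod R U] [LMod Sᵐᵒᵖ U] [SMulCommClass R Sᵐᵒᵖ U]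
  [SMulCommClass Sᵐᵒᵖ R U]

/-- The canonical map `μ : S → End_R(U)`, `s ↦ (x ↦ x·s)`. -/
def muMap (s : S) : LinMap R U U :=
  ⟨fun x => op s • x,
   ⟨fun x y => LMod.smul_add' (op s) x y, fun r x => (smul_comm r (op s) x).symm⟩⟩

/-- The canonical map `λ : R → End_S(U)`, `r ↦ (x ↦ r·x)`. -/
def lambdaMap (r : R) : LinMap Sᵐᵒᵖ U U :=
  ⟨fun x => r • x,
   ⟨fun x y => LMod.smul_add' r x y, fun s x => smul_comm r s x⟩⟩

/-- `Hom_R(M,U)S`, the largest unitary right `S`-submodule of `Hom_R(M,U)`,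
as a type (a right `S`-module, i.e. a left `Sᵐᵒᵖ`-module). -/
abbrev DHomL (M : Type u) [AddCommGroup M] [LMod R M] : Type u :=
  ↥(umax Sᵐᵒᵖ (LinMap R M U))

/-- `RHom_S(N,U)`, the largest unitary left `R`-submodule of `Hom_S(N,U)`
for a right `S`-module `N`, as a type. -/
abbrev DHomR (N : Type u) [AddCommGroup N] [LMod Sᵐᵒᵖ N] : Type u :=
  ↥(umax R (LinMap Sᵐᵒᵖ N U))

variable {R S U}

/-- Action of the contravariant functor `Hom_R(−,U)S` on morphisms
(precomposition). -/
def dHomLMap {M N : Type u} [AddCommGroup M] [AddCommGroup N] [LMod R M] [LMod R N]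
    (f : LinMap R M N) (α : DHomL R S U N) : DHomL R S U M :=
  ⟨⟨fun x => α.1.1 (f.1 x),
    ⟨fun x y => by rw [f.2.map_add, α.1.2.map_add],
     fun r x => by rw [f.2.map_smul, α.1.2.map_smul]⟩⟩,
   umax_mapsTo (C := Sᵐᵒᵖ)
     (fun g => ⟨fun x => g.1 (f.1 x),
       ⟨fun x y => by rw [f.2.map_add, g.2.map_add],
        fun r x => by rw [f.2.map_smul, g.2.map_smul]⟩⟩)
     (fun g g' => LinMap.ext rfl) (fun s g => LinMap.ext rfl) α.2⟩

/-- Action of the contravariant functor `RHom_S(−,U)` on morphisms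
(precomposition). -/
def dHomRMap {M N : Type u} [AddCommGroup M] [AddCommGroup N] [LMod Sᵐᵒᵖ M]
    [LMod Sᵐᵒᵖ N] (f : LinMap Sᵐᵒᵖ M N) (α : DHomR R S U N) : DHomR R S U M :=
  ⟨⟨fun x => α.1.1 (f.1 x),
    ⟨fun x y => by rw [f.2.map_add, α.1.2.map_add],
     fun s x => by rw [f.2.map_smul, α.1.2.map_smul]⟩⟩,
   umax_mapsTo (C := R)
     (fun g => ⟨fun x => g.1 (f.1 x),
       ⟨fun x y => by rw [f.2.map_add, g.2.map_add],
        fun s x => by rw [f.2.map_smul, g.2.map_smul]⟩⟩)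
     (fun g g' => LinMap.ext rfl) (fun r g => LinMap.ext rfl) α.2⟩

variable (R S U)

/-- The contravariant functor `Hom_R(−,U)S` from unitary left `R`-modules to
unitary right `S`-modules. -/
def dualL [HasLocalUnits S] : (UMod.{u, u} R)ᵒᵖ ⥤ UMod.{u, u} Sᵐᵒᵖ where
  obj M := ⟨DHomL R S U M.unop.carrier, umax_unitary⟩
  map f := ⟨dHomLMap f.unop,
    ⟨fun α β => Subtype.ext (LinMap.ext (funext fun x => rfl)),
     fun s α => Subtype.ext (LinMap.ext (funext fun x => rfl))⟩⟩
  map_id M := LinMap.ext (funext fun α => Subtype.ext (LinMap.ext (funext fun x => rfl)))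
  map_comp f g := LinMap.ext (funext fun α => Subtype.ext (LinMap.ext (funext fun x => rfl)))

/-- The contravariant functor `RHom_S(−,U)` from unitary right `S`-modules to
unitary left `R`-modules. -/
def dualR [HasLocalUnits R] : (UMod.{u, u} Sᵐᵒᵖ)ᵒᵖ ⥤ UMod.{u, u} R where
  obj N := ⟨DHomR R S U N.unop.carrier, umax_unitary⟩
  map f := ⟨dHomRMap f.unop,
    ⟨fun α β => Subtype.ext (LinMap.ext (funext fun x => rfl)),
     fun r α => Subtype.ext (LinMap.ext (funext fun x => rfl))⟩⟩
  map_id N := LinMap.ext (funext fun α => Subtype.ext (LinMap.ext (funext fun x => rfl)))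
  map_comp f g := LinMap.ext (funext fun α => Subtype.ext (LinMap.ext (funext fun x => rfl)))

/-- The underlying function of the evaluation map
`φ_X : X → RHom_S(Hom_R(X,U)S, U)`, `(x)φ_X : β ↦ (x)β`. -/
def evalFunL (X : Type u) [AddCommGroup X] [LMod R X] (x : X) :
    LinMap Sᵐᵒᵖ (DHomL R S U X) U :=
  ⟨fun β => β.1.1 x, ⟨fun β β' => rfl, fun s β => rfl⟩⟩

/-- A unitary left `R`-module `X` is `U`-reflexive: the evaluation map
`φ_X : X → RHom_S(Hom_R(X,U)S, U)` is an isomorphism. -/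
def IsLReflexive (X : Type u) [AddCommGroup X] [LMod R X] : Prop :=
  ∃ h : ∀ x : X, evalFunL R S U X x ∈ umax R (LinMap Sᵐᵒᵖ (DHomL R S U X) U),
    Function.Bijective (fun x : X => (⟨evalFunL R S U X x, h x⟩ : DHomR R S U (DHomL R S U X)))

/-- The underlying function of the evaluation map
`ψ_Y : Y → Hom_R(RHom_S(Y,U),U)S`, `ψ_Y(y) : α ↦ α(y)`. -/
def evalFunR (Y : Type u) [AddCommGroup Y] [LMod Sᵐᵒᵖ Y] (y : Y) :
    LinMap R (DHomR R S U Y) U :=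
  ⟨fun α => α.1.1 y, ⟨fun α α' => rfl, fun r α => rfl⟩⟩

/-- A unitary right `S`-module `Y` is `U`-reflexive: the evaluation map
`ψ_Y : Y → Hom_R(RHom_S(Y,U),U)S` is an isomorphism. -/
def IsRReflexive (Y : Type u) [AddCommGroup Y] [LMod Sᵐᵒᵖ Y] : Prop :=
  ∃ h : ∀ y : Y, evalFunR R S U Y y ∈ umax Sᵐᵒᵖ (LinMap R (DHomR R S U Y) U),
    Function.Bijective (fun y : Y => (⟨evalFunR R S U Y y, h y⟩ : DHomL R S U (DHomR R S U Y)))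

/-- Properties (I) and (II) of a Morita duality bimodule: `U` is the direct
limit of a split direct system of finitely generated injective unitary left
`R`-modules whose members form a cogenerating set for the category of unitary
left `R`-modules, and `μ : S → End_R(U)` is a monomorphism whose image is
exactly the set of endomorphisms factoring through one of the induced
projections. -/
def SatisfiesI_II : Prop :=
  ∃ (ι : Type u) (rel : ι → ι → Prop),
    (∀ i, rel i i) ∧ (∀ {i j k}, rel i j → rel j k → rel i k) ∧
    Nonempty ι ∧ (∀ i j, ∃ k, rel i k ∧ rel j k) ∧
    ∃ (D : SplitSystem.{u, u} R ι rel) (c : LimitCocone R D U)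
      (proj : ∀ i, LinMap R U (D.obj i).carrier),
      (∀ i, IsFG R (D.obj i).carrier ∧ CategoryTheory.Injective (D.obj i)) ∧
      IsCogenSet R {M | ∃ i, M = D.obj i} ∧
      (∀ i (x : (D.obj i).carrier), (proj i).1 ((c.incl i).1 x) = x) ∧
      (∀ {i j} (h : rel i j) (x : U), (D.split h).1 ((proj j).1 x) = (proj i).1 x) ∧
      Function.Injective (muMap R S U) ∧
      Set.range (muMap R S U) =
        {g : LinMap R U U | ∃ (i : ι) (γ : LinMap R (D.obj i).carrier U),
          g.1 = fun x => γ.1 ((proj i).1 x)}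

/-- Properties (III) and (IV) of a Morita duality bimodule (the right-module
side, dual to (I) and (II)). -/
def SatisfiesIII_IV : Prop :=
  ∃ (ι : Type u) (rel : ι → ι → Prop),
    (∀ i, rel i i) ∧ (∀ {i j k}, rel i j → rel j k → rel i k) ∧
    Nonempty ι ∧ (∀ i j, ∃ k, rel i k ∧ rel j k) ∧
    ∃ (D : SplitSystem.{u, u} Sᵐᵒᵖ ι rel) (c : LimitCocone Sᵐᵒᵖ D U)
      (proj : ∀ i, LinMap Sᵐᵒᵖ U (D.obj i).carrier),
      (∀ i, IsFG Sᵐᵒᵖ (D.obj i).carrier ∧ CategoryTheory.Injective (D.obj i)) ∧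
      IsCogenSet Sᵐᵒᵖ {M | ∃ i, M = D.obj i} ∧
      (∀ i (x : (D.obj i).carrier), (proj i).1 ((c.incl i).1 x) = x) ∧
      (∀ {i j} (h : rel i j) (x : U), (D.split h).1 ((proj j).1 x) = (proj i).1 x) ∧
      Function.Injective (lambdaMap R S U) ∧
      Set.range (lambdaMap R S U) =
        {g : LinMap Sᵐᵒᵖ U U | ∃ (i : ι) (γ : LinMap Sᵐᵒᵖ (D.obj i).carrier U),
          g.1 = fun x => γ.1 ((proj i).1 x)}

/-- A Morita duality `R`-`S`-bimodule. -/
def IsMoritaDualityBimod : Prop :=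
  IsUnitary R U ∧ IsUnitary Sᵐᵒᵖ U ∧ SatisfiesI_II R S U ∧ SatisfiesIII_IV R S U

end bimod

section cats

variable (R : Type u) [NonUnitalRing R]

/-- The category of finitely generated unitary left `R`-modules. -/
abbrev FGMod := CategoryTheory.ObjectProperty.FullSubcategory (fun M : UMod.{u, u} R => IsFG R M.carrier)

/-- The category of finitely generated injective unitary left `R`-modules. -/
abbrev InjFGMod := CategoryTheory.ObjectProperty.FullSubcategory
  (fun M : UMod.{u, u} R => IsFG R M.carrier ∧ CategoryTheory.Injective M)

/-- The category of finitely generated projective unitary left `R`-modules. -/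
abbrev ProjFGMod := CategoryTheory.ObjectProperty.FullSubcategory
  (fun M : UMod.{u, u} R => IsFG R M.carrier ∧ CategoryTheory.Projective M)

/-- There is a duality (an additive contravariant equivalence) between the
categories of finitely generated unitary left `R`-modules and finitely
generated unitary right `S`-modules. -/
def ExistsFGDuality (R S : Type u) [NonUnitalRing R] [NonUnitalRing S] : Prop :=
  ∃ F : (FGMod R)ᵒᵖ ⥤ FGMod Sᵐᵒᵖ, F.Additive ∧ F.IsEquivalence

/-- Bundled ring with local units. -/
structure RingLU : Type (u + 1) where
  carrier : Type u
  [ring : NonUnitalRing carrier]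
  [lu : HasLocalUnits carrier]

attribute [instance] RingLU.ring RingLU.lu

/-- A ring with local units is left Morita if there is a ring `R'` with local
units and a duality from finitely generated unitary left `R`-modules to
finitely generated unitary right `R'`-modules. -/
def IsLeftMorita : Prop :=
  ∃ R' : RingLU.{u}, ExistsFGDuality R R'.carrier

/-- `R` is left locally finite: every finitely generated unitary left
`R`-module has finite length (equivalently, the lengths of chains of
submodules of such a module are bounded). -/
def IsLeftLocallyFinite : Prop :=
  ∀ (M : Type u) [AddCommGroup M] [LMod R M], IsUnitary R M → IsFG R M →
    ∃ n : ℕ, ∀ c : Fin (n + 1) → AddSubgroup M,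
      (∀ i (r : R) x, x ∈ c i → r • x ∈ c i) →
      ¬(∀ i : Fin n, c i.castSucc < c i.succ)

/-- `R` is left locally noetherian: every finitely generated unitary left
`R`-module is noetherian. -/
def IsLeftLocallyNoetherian : Prop :=
  ∀ (M : Type u) [AddCommGroup M] [LMod R M], IsUnitary R M → IsFG R M →
    ∀ c : ℕ → AddSubgroup M, (∀ i (r : R) x, x ∈ c i → r • x ∈ c i) →
      (∀ i, c i ≤ c (i + 1)) → ∃ n, ∀ m, n ≤ m → c m = c n

end cats

section principal

variable (R : Type u) [NonUnitalRing R]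

/-- The principal left ideal `Re` of a non-unital ring, for an element `e`. -/
def principalLeft (e : R) : AddSubgroup R where
  carrier := {y : R | ∃ r : R, y = r * e}
  add_mem' := by
    rintro a b ⟨r, hr⟩ ⟨s, hs⟩
    exact ⟨r + s, by rw [hr, hs, add_mul]⟩
  zero_mem' := ⟨0, by rw [zero_mul]⟩
  neg_mem' := by
    rintro a ⟨r, hr⟩
    exact ⟨-r, by rw [hr, neg_mul]⟩

instance (e : R) : LMod R ↥(principalLeft R e) where
  smul r y := ⟨r * y.1, by obtain ⟨s, hs⟩ := y.2; exact ⟨r * s, by rw [hs, mul_assoc]⟩⟩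
  smul_add' r m n := Subtype.ext (mul_add r m.1 n.1)
  add_smul' r s m := Subtype.ext (add_mul r s m.1)
  mul_smul' r s m := Subtype.ext (mul_assoc r s m.1)

/-- The principal right ideal `fS` of a non-unital ring, as a right module
(left module over the opposite ring). -/
def principalRight (f : R) : AddSubgroup R where
  carrier := {y : R | ∃ s : R, y = f * s}
  add_mem' := by
    rintro a b ⟨r, hr⟩ ⟨s, hs⟩
    exact ⟨r + s, by rw [hr, hs, mul_add]⟩
  zero_mem' := ⟨0, by rw [mul_zero]⟩
  neg_mem' := by
    rintro a ⟨r, hr⟩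
    exact ⟨-r, by rw [hr, mul_neg]⟩

instance (f : R) : LMod Rᵐᵒᵖ ↥(principalRight R f) where
  smul s y := ⟨y.1 * s.unop, by
    obtain ⟨t, ht⟩ := y.2; exact ⟨t * s.unop, by rw [ht, mul_assoc]⟩⟩
  smul_add' s m n := Subtype.ext (add_mul m.1 n.1 s.unop)
  add_smul' s t m := Subtype.ext (mul_add m.1 s.unop t.unop)
  mul_smul' s t m := Subtype.ext (mul_assoc m.1 t.unop s.unop).symm

end principal

section restr

variable (R S : Type u) [NonUnitalRing R] [NonUnitalRing S] [HasLocalUnits R] [HasLocalUnits S]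
variable (U : Type u) [AddCommGroup U] [LMod R U] [LMod Sᵐᵒᵖ U] [SMulCommClass R Sᵐᵒᵖ U]
  [SMulCommClass Sᵐᵒᵖ R U]

/-- The restriction of the contravariant functor `Hom_R(−,U)S` to finitely
generated modules, given that it preserves finite generation. -/
def dualLRestr (hFG : ∀ X : UMod.{u, u} R, IsFG R X.carrier →
    IsFG Sᵐᵒᵖ ((dualL R S U).obj (Opposite.op X)).carrier) :
    (FGMod R)ᵒᵖ ⥤ FGMod Sᵐᵒᵖ :=
  CategoryTheory.ObjectProperty.lift _
    ((CategoryTheory.ObjectProperty.ι _).op ⋙ dualL R S U)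
    (fun X => hFG X.unop.obj X.unop.property)

/-- The restriction of the contravariant functor `RHom_S(−,U)` to finitely
generated modules, given that it preserves finite generation. -/
def dualRRestr (hFG : ∀ Y : UMod.{u, u} Sᵐᵒᵖ, IsFG Sᵐᵒᵖ Y.carrier →
    IsFG R ((dualR R S U).obj (Opposite.op Y)).carrier) :
    (FGMod Sᵐᵒᵖ)ᵒᵖ ⥤ FGMod R :=
  CategoryTheory.ObjectProperty.lift _
    ((CategoryTheory.ObjectProperty.ι _).op ⋙ dualR R S U)
    (fun Y => hFG Y.unop.obj Y.unop.property)

end restr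
/-! ### Direct sums of modules over non-unital rings -/

section dfinsupp

variable {R : Type u} [NonUnitalRing R] {ι : Type v} {β : ι → Type w}
  [∀ i, AddCommGroup (β i)] [∀ i, LMod R (β i)]

/-- Pointwise scalar action on a direct sum. -/
def dfinsuppSMul (r : R) (f : Π₀ i, β i) : Π₀ i, β i :=
  f.mapRange (fun _ x => r • x) (fun _ => LMod.smul_zero' r)

theorem dfinsuppSMul_apply (r : R) (f : Π₀ i, β i) (i : ι) :
    dfinsuppSMul r f i = r • f i := DFinsupp.mapRange_apply _ _ f i

instance DFinsupp.instLMod : LMod R (Π₀ i, β i) where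
  smul := dfinsuppSMul
  smul_add' r f g := by
    ext i
    show dfinsuppSMul r (f + g) i = (dfinsuppSMul r f + dfinsuppSMul r g) i
    rw [DFinsupp.add_apply, dfinsuppSMul_apply, dfinsuppSMul_apply, dfinsuppSMul_apply,
      DFinsupp.add_apply]
    exact LMod.smul_add' r (f i) (g i)
  add_smul' r s f := by
    ext i
    show dfinsuppSMul (r + s) f i = (dfinsuppSMul r f + dfinsuppSMul s f) i
    rw [DFinsupp.add_apply, dfinsuppSMul_apply, dfinsuppSMul_apply, dfinsuppSMul_apply]
    exact LMod.add_smul' r s (f i)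
  mul_smul' r s f := by
    ext i
    show dfinsuppSMul (r * s) f i = dfinsuppSMul r (dfinsuppSMul s f) i
    rw [dfinsuppSMul_apply, dfinsuppSMul_apply, dfinsuppSMul_apply]
    exact LMod.mul_smul' r s (f i)

@[simp] theorem DFinsupp.lmod_smul_apply (r : R) (f : Π₀ i, β i) (i : ι) :
    (r • f) i = r • f i := dfinsuppSMul_apply r f i

end dfinsupp
/-! ### Miscellaneous helpers: submodule stability, `Pf`, traces, sums -/

section extra

variable {R : Type u} [NonUnitalRing R] {M : Type v} [AddCommGroup M] [LMod R M]

theorem closure_smul_stable {s : Set M}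
    (h : ∀ (r : R) (x : M), x ∈ s → r • x ∈ AddSubgroup.closure s) (r : R) {x : M}
    (hx : x ∈ AddSubgroup.closure s) : r • x ∈ AddSubgroup.closure s := by
  induction hx using AddSubgroup.closure_induction with
  | mem y hy => exact h r y hy
  | zero => rw [LMod.smul_zero']; exact AddSubgroup.zero_mem _
  | add y z hy hz ihy ihz => rw [LMod.smul_add']; exact AddSubgroup.add_mem _ ihy ihz
  | neg y hy ihy => rw [LMod.smul_neg']; exact AddSubgroup.neg_mem _ ihy

end extra

section pe

variable (R S : Type u) [NonUnitalRing R] [NonUnitalRing S]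
variable (P : Type u) [AddCommGroup P] [LMod R P] [LMod Sᵐᵒᵖ P] [SMulCommClass R Sᵐᵒᵖ P]

/-- The submodule `Pf = {x·f | x ∈ P}` of `P`, for `f ∈ S`. -/
def peSub (f : S) : AddSubgroup P where
  carrier := Set.range (fun x : P => (op f : Sᵐᵒᵖ) • x)
  add_mem' := by
    rintro a b ⟨x, rfl⟩ ⟨y, rfl⟩
    exact ⟨x + y, LMod.smul_add' (op f) x y⟩
  zero_mem' := ⟨0, LMod.smul_zero' _⟩
  neg_mem' := by
    rintro a ⟨x, rfl⟩
    exact ⟨-x, LMod.smul_neg' (op f) x⟩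

instance (f : S) : LMod R ↥(peSub S P f) where
  smul r y := ⟨r • y.1, by
    obtain ⟨x, hx⟩ := y.2
    exact ⟨r • x, by rw [← hx, smul_comm]⟩⟩
  smul_add' r m n := Subtype.ext (LMod.smul_add' r m.1 n.1)
  add_smul' r s m := Subtype.ext (LMod.add_smul' r s m.1)
  mul_smul' r s m := Subtype.ext (LMod.mul_smul' r s m.1)

variable {R S P} in
theorem sTrSub_smul_stable {M : Type u} [AddCommGroup M] [LMod R M] (r : R) {m : M}
    (hm : m ∈ sTrSub R S P M) : r • m ∈ sTrSub R S P M := by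
  refine closure_smul_stable (fun r' x hx => ?_) r hm
  obtain ⟨g, hg, y, rfl⟩ := hx
  exact AddSubgroup.subset_closure ⟨g, hg, r' • y, (g.2.map_smul r' y).symm⟩

instance (M : Type u) [AddCommGroup M] [LMod R M] : LMod R ↥(sTrSub R S P M) where
  smul r y := ⟨r • y.1, sTrSub_smul_stable r y.2⟩
  smul_add' r m n := Subtype.ext (LMod.smul_add' r m.1 n.1)
  add_smul' r s m := Subtype.ext (LMod.add_smul' r s m.1)
  mul_smul' r s m := Subtype.ext (LMod.mul_smul' r s m.1)

end pe

section sum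

/-- Summation over a direct sum against a family of additive maps
(the canonical map `⊕_I M_i → N`). -/
noncomputable def dfinsuppSum {ι : Type u} {β : ι → Type v} [∀ i, AddCommGroup (β i)]
    {γ : Type w} [AddCommGroup γ] (f : ∀ i, β i →+ γ) (x : Π₀ i, β i) : γ :=
  letI := Classical.decEq ι
  DFinsupp.sumAddHom f x

end sum

/-!
Everything rests on local dual bases. For an idempotent `e ∈ S` the finitely generated module `Pe`
lies in the image of some `P_i` of the split direct system; the map `P_i → P` is injective, so `Pe`
is a retract of the projective `P_i`, and splitting a finite free presentation of `Pe` gives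
`x·e = Σ_t (x)b_t · t` with `b_t ∈ G_P`. Hence if the trace ideal `T = Σ_{β ∈ G_P} Im β` kills the
image of `g : P → N`, then `S` kills `g`, and `st_P(N) = 0` makes the annihilator of `T` in `N`
zero. This gives (a), because `(x)β · (w)f = ((x)β · w)f` and `x ↦ (x)β · w` lies in
`SHom_R(P,X) = 0`, as well as the injectivity of `γ_N`, whose kernel is that annihilator.

For surjectivity, `Φ ∈ RHom_S(G_P, SHom_R(P,N))` induces an `R`-linear map `δ : T → N`,
`(x)β ↦ (x)((β)Φ)`. It is well defined because `S·End_R(P) = S` puts `y ↦ (y)β'·x` in `S`, whence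
`(β'·t)Φ = (β')(γ_N n)` for every pair `(t, n)` in the graph of `δ`. Injectivity of `N` extends `δ`
to `R`, and its value at a local unit `u` with `uΦ = Φ` is the preimage of `Φ`.
-/

section LModLemmas

variable {R : Type u} [NonUnitalRing R] {M : Type v} {N : Type w}
  [AddCommGroup M] [AddCommGroup N] [LMod R M] [LMod R N]

def LMod.smulAddHom (r : R) : M →+ M :=
  AddMonoidHom.mk' (fun m => r • m) (LMod.smul_add' r)

theorem LMod.smul_sum {ι : Type*} (r : R) (s : Finset ι) (f : ι → M) :
    r • ∑ i ∈ s, f i = ∑ i ∈ s, r • f i :=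
  map_sum (LMod.smulAddHom r) f s

def IsLHom.toAddMonoidHom {f : M → N} (hf : IsLHom R f) : M →+ N :=
  AddMonoidHom.mk' f hf.map_add

theorem IsLHom.map_sum {f : M → N} (hf : IsLHom R f) {ι : Type*} (s : Finset ι) (g : ι → M) :
    f (∑ i ∈ s, g i) = ∑ i ∈ s, f (g i) :=
  _root_.map_sum hf.toAddMonoidHom g s

theorem IsLHom.comp {K : Type*} [AddCommGroup K] [LMod R K] {f : M → N} {g : N → K}
    (hg : IsLHom R g) (hf : IsLHom R f) : IsLHom R (g ∘ f) :=
  ⟨fun x y => (congrArg g (hf.map_add x y)).trans (hg.map_add _ _),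
   fun r x => (congrArg g (hf.map_smul r x)).trans (hg.map_smul r _)⟩

theorem smul_mem_of_mem_closure {X : Set M} {Q : AddSubgroup M} (r : R)
    (h : ∀ x ∈ X, r • x ∈ Q) {m : M} (hm : m ∈ AddSubgroup.closure X) : r • m ∈ Q :=
  AddSubgroup.closure_le (K := Q.comap (LMod.smulAddHom r)) |>.mpr h hm

instance Prod.instLMod : LMod R (M × N) where
  smul r p := (r • p.1, r • p.2)
  smul_add' r p q := Prod.ext (LMod.smul_add' r _ _) (LMod.smul_add' r _ _)
  add_smul' r s p := Prod.ext (LMod.add_smul' r s _) (LMod.add_smul' r s _)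
  mul_smul' r s p := Prod.ext (LMod.mul_smul' r s _) (LMod.mul_smul' r s _)

instance Pi.instLMod {τ : Type*} : LMod R (τ → R) where
  smul r w t := r * w t
  smul_add' r w w' := funext fun t => mul_add r (w t) (w' t)
  add_smul' r s w := funext fun t => add_mul r s (w t)
  mul_smul' r s w := funext fun t => mul_assoc r s (w t)

theorem Pi.lmod_smul_apply {τ : Type*} (r : R) (w : τ → R) (t : τ) : (r • w) t = r * w t := rfl

end LModLemmas

section LinMapLemmas

variable {R : Type u} [NonUnitalRing R] {M : Type v} {N : Type w}
  [AddCommGroup M] [AddCommGroup N] [LMod R M] [LMod R N]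

def LinMap.comp {K : Type*} [AddCommGroup K] [LMod R K] (g : LinMap R N K) (f : LinMap R M N) :
    LinMap R M K :=
  ⟨g.1 ∘ f.1, g.2.comp f.2⟩

def LinMap.proj {τ : Type*} (t : τ) : LinMap R (τ → R) R :=
  ⟨fun w => w t, fun _ _ => rfl, fun _ _ => rfl⟩

theorem LinMap.exists_lift_of_injective {K : Type*} [AddCommGroup K] [LMod R K]
    (g : LinMap R N K) (hg : Function.Injective g.1) (f : LinMap R M K)
    (hf : ∀ m, ∃ n, g.1 n = f.1 m) : ∃ u : LinMap R M N, ∀ m, g.1 (u.1 m) = f.1 m := by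
  choose u hu using hf
  refine ⟨⟨u, fun x y => hg ?_, fun r x => hg ?_⟩, hu⟩
  · rw [hu, g.2.map_add, hu, hu, f.2.map_add]
  · rw [hu, g.2.map_smul, hu, f.2.map_smul]

theorem exists_linMap_of_graph {A B : Type*} [AddCommGroup A] [AddCommGroup B] [LMod R A]
    [LMod R B] (K : AddSubgroup A) [LMod R ↥K] (hK : ∀ (r : R) (a : ↥K), ((r • a : ↥K) : A) = r • a)
    (W : AddSubgroup (A × B)) (hWsmul : ∀ (r : R) {p : A × B}, p ∈ W → r • p ∈ W)
    (hWzero : ∀ b : B, ((0 : A), b) ∈ W → b = 0) (hKW : ∀ a ∈ K, ∃ b, (a, b) ∈ W) :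
    ∃ δ : LinMap R ↥K B, ∀ (a : ↥K) (b : B), ((a : A), b) ∈ W → δ.1 a = b := by
  have hfun : ∀ {a : A} {b b' : B}, (a, b) ∈ W → (a, b') ∈ W → b = b' := fun h h' =>
    sub_eq_zero.mp (hWzero _ (by simpa using W.sub_mem h h'))
  choose δ hδ using fun a : ↥K => hKW a a.2
  refine ⟨⟨δ, fun a a' => hfun (hδ (a + a')) (W.add_mem (hδ a) (hδ a')),
    fun r a => hfun (hδ (r • a)) ?_⟩, fun a b h => hfun (hδ a) h⟩
  rw [hK]
  exact hWsmul r (hδ a)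

end LinMapLemmas

section Unitary

variable {R : Type u} [NonUnitalRing R] {M : Type v} {N : Type w}
  [AddCommGroup M] [AddCommGroup N] [LMod R M] [LMod R N]

theorem IsUnitary.of_surjective {f : M → N} (hf : IsLHom R f) (hsurj : Function.Surjective f)
    (hM : IsUnitary R M) : IsUnitary R N := by
  intro n
  obtain ⟨m, rfl⟩ := hsurj n
  exact umax_mapsTo f hf.map_add hf.map_smul (hM m)

theorem IsUnitary.of_forall_exists_smul_eq (h : ∀ m : M, ∃ r : R, r • m = m) :
    IsUnitary R M := fun m =>
  let ⟨r, hr⟩ := h m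
  AddSubgroup.subset_closure ⟨r, m, hr.symm⟩

theorem HasLocalUnits.exists_left_unit [HasLocalUnits R] (s : Finset R) :
    ∃ e : R, ∀ x ∈ s, e * x = x :=
  let ⟨e, _, he⟩ := HasLocalUnits.exists_unit s
  ⟨e, fun x hx => (he x hx).1⟩

theorem exists_smul_eq_self_of_mem_umax [HasLocalUnits R] {m : M} (hm : m ∈ umax R M) :
    ∃ e : R, e • m = m := by
  suffices ∃ s : Finset R, ∀ e : R, (∀ x ∈ s, e * x = x) → e • m = m by
    obtain ⟨s, hs⟩ := this
    obtain ⟨e, he⟩ := HasLocalUnits.exists_left_unit s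
    exact ⟨e, hs e he⟩
  classical
  induction hm using AddSubgroup.closure_induction with
  | mem x hx =>
    obtain ⟨r, n, rfl⟩ := hx
    exact ⟨{r}, fun e he => by rw [← LMod.mul_smul', he r (Finset.mem_singleton_self r)]⟩
  | zero => exact ⟨∅, fun e _ => LMod.smul_zero' e⟩
  | add x y _ _ hx hy =>
    obtain ⟨s, hs⟩ := hx
    obtain ⟨s', hs'⟩ := hy
    refine ⟨s ∪ s', fun e he => ?_⟩
    rw [LMod.smul_add', hs e fun x hx => he x (Finset.mem_union_left _ hx),
      hs' e fun x hx => he x (Finset.mem_union_right _ hx)]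
  | neg x _ hx =>
    obtain ⟨s, hs⟩ := hx
    exact ⟨s, fun e he => by rw [LMod.smul_neg', hs e he]⟩

theorem NonUnitalRing.isUnitary_self [HasLocalUnits R] : IsUnitary R R :=
  IsUnitary.of_forall_exists_smul_eq fun r =>
    let ⟨e, he⟩ := HasLocalUnits.exists_left_unit {r}
    ⟨e, he r (Finset.mem_singleton_self r)⟩

theorem Pi.isUnitary [HasLocalUnits R] {τ : Type*} [Fintype τ] : IsUnitary R (τ → R) := by
  classical
  refine IsUnitary.of_forall_exists_smul_eq fun w => ?_
  obtain ⟨e, he⟩ := HasLocalUnits.exists_left_unit (Finset.univ.image w)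
  exact ⟨e, funext fun t => he _ (Finset.mem_image_of_mem w (Finset.mem_univ t))⟩

def UMod.regular [HasLocalUnits R] : UMod.{u, u} R :=
  ⟨R, NonUnitalRing.isUnitary_self⟩

def UMod.free [HasLocalUnits R] (τ : Type u) [Fintype τ] : UMod.{u, u} R :=
  ⟨τ → R, Pi.isUnitary⟩

theorem UMod.mono_of_injective {A B : UMod.{u, v} R} (f : A ⟶ B) (hf : Function.Injective f.1) :
    Mono f :=
  ⟨fun g h hgh => LinMap.ext (funext fun x => hf (congrFun (congrArg Subtype.val hgh) x))⟩

theorem UMod.epi_of_surjective {A B : UMod.{u, v} R} (f : A ⟶ B) (hf : Function.Surjective f.1) :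
    Epi f :=
  ⟨fun g h hgh => LinMap.ext (funext fun y => by
    obtain ⟨x, rfl⟩ := hf y
    exact congrFun (congrArg Subtype.val hgh) x)⟩

end Unitary

section Span

variable (R : Type u) [NonUnitalRing R] {M : Type v} {N : Type w}
  [AddCommGroup M] [AddCommGroup N] [LMod R M] [LMod R N]

def rspan (X : Set M) : AddSubgroup M :=
  AddSubgroup.closure {m | ∃ r : R, ∃ x ∈ X, m = r • x}

def linComb (ζ : Finset M) : (ζ → R) →+ M :=
  AddMonoidHom.mk' (fun w => ∑ t, w t • (t : M)) fun w w' => by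
    simp only [Pi.add_apply, LMod.add_smul', Finset.sum_add_distrib]

variable {R}

theorem smul_mem_rspan_of_mem_lspan (r : R) {X : Set M} {m : M} (hm : m ∈ lspan R X) :
    r • m ∈ rspan R X := by
  refine smul_mem_of_mem_closure r ?_ hm
  rintro x (hx | ⟨r', y, hy, rfl⟩)
  · exact AddSubgroup.subset_closure ⟨r, x, hx, rfl⟩
  · exact AddSubgroup.subset_closure ⟨r * r', y, hy, (LMod.mul_smul' r r' y).symm⟩

theorem IsLHom.map_mem_rspan {f : M → N} (hf : IsLHom R f) (hM : IsUnitary R M) {X : Set N}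
    (hX : ∀ m, f m ∈ lspan R X) (m : M) : f m ∈ rspan R X := by
  refine (AddSubgroup.closure_le (K := (rspan R X).comap hf.toAddMonoidHom)).mpr ?_ (hM m)
  rintro _ ⟨r, n, rfl⟩
  show f (r • n) ∈ rspan R X
  rw [hf.map_smul]
  exact smul_mem_rspan_of_mem_lspan r (hX n)

theorem IsLHom.rspan_le_range {f : M → N} (hf : IsLHom R f) {X : Set N}
    (hX : X ⊆ Set.range f) : rspan R X ≤ hf.toAddMonoidHom.range := by
  rw [rspan, AddSubgroup.closure_le]
  rintro _ ⟨r, x, hx, rfl⟩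
  obtain ⟨m, rfl⟩ := hX hx
  exact ⟨r • m, hf.map_smul r m⟩

theorem linComb_smul (ζ : Finset M) (r : R) (w : ζ → R) :
    linComb R ζ (r • w) = r • linComb R ζ w := by
  simp only [linComb, AddMonoidHom.mk'_apply, LMod.smul_sum, Pi.lmod_smul_apply, LMod.mul_smul']

theorem rspan_le_range_linComb (ζ : Finset M) : rspan R (ζ : Set M) ≤ (linComb R ζ).range := by
  classical
  rw [rspan, AddSubgroup.closure_le]
  rintro _ ⟨r, t, ht, rfl⟩
  refine ⟨Pi.single ⟨t, ht⟩ r, ?_⟩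
  rw [linComb, AddMonoidHom.mk'_apply, Fintype.sum_eq_single ⟨t, ht⟩]
  · rw [Pi.single_eq_same]
  · intro t' ht'
    rw [Pi.single_eq_of_ne ht', LMod.zero_smul']

end Span

section DirectLimit

variable {R : Type u} [NonUnitalRing R] {ι : Type w} {rel : ι → ι → Prop}
  {D : SplitSystem.{u, v} R ι rel} {P : Type v} [AddCommGroup P] [LMod R P]

theorem SplitSystem.map_injective {i j : ι} (h : rel i j) : Function.Injective (D.map h).1 :=
  Function.LeftInverse.injective (D.split_map h)

namespace LimitCocone

theorem incl_injective (c : LimitCocone R D P) (i : ι) : Function.Injective (c.incl i).1 := by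
  refine (injective_iff_map_eq_zero (c.incl i).2.toAddMonoidHom).mpr fun y hy => ?_
  obtain ⟨j, h, hj⟩ := c.eventually_zero i y hy
  exact SplitSystem.map_injective h (hj.trans (D.map h).2.map_zero.symm)

theorem range_mono (c : LimitCocone R D P) {i j : ι} (h : rel i j) {x : P}
    (hx : x ∈ Set.range (c.incl i).1) : x ∈ Set.range (c.incl j).1 :=
  let ⟨y, hy⟩ := hx
  ⟨(D.map h).1 y, (c.compat h y).trans hy⟩

theorem exists_finset_subset_range (c : LimitCocone R D P) (hne : Nonempty ι)
    (hdir : ∀ i j, ∃ k, rel i k ∧ rel j k) (s : Finset P) :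
    ∃ i, ∀ x ∈ s, x ∈ Set.range (c.incl i).1 := by
  classical
  induction s using Finset.induction_on with
  | empty => exact ⟨hne.some, by simp⟩
  | insert a s _ ih =>
    obtain ⟨i, hi⟩ := ih
    obtain ⟨j, y, rfl⟩ := c.exhaustive a
    obtain ⟨k, hik, hjk⟩ := hdir i j
    refine ⟨k, Finset.forall_mem_insert _ _ _ |>.mpr ⟨c.range_mono hjk ⟨y, rfl⟩, ?_⟩⟩
    exact fun x hx => c.range_mono hik (hi x hx)

theorem isUnitary (c : LimitCocone R D P) : IsUnitary R P := fun x => by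
  obtain ⟨i, y, rfl⟩ := c.exhaustive x
  exact umax_mapsTo _ (c.incl i).2.map_add (c.incl i).2.map_smul ((D.obj i).unitary y)

end LimitCocone

theorem IsLocallyProjective.isUnitary (h : IsLocallyProjective R P) : IsUnitary R P :=
  let ⟨_, _, _, _, _, _, _, c, _⟩ := h
  c.isUnitary

end DirectLimit

section PeSub

variable {R S : Type u} [NonUnitalRing R] [NonUnitalRing S] {P : Type u} [AddCommGroup P]
  [LMod R P] [LMod Sᵐᵒᵖ P] [SMulCommClass R Sᵐᵒᵖ P]

theorem smul_mem_peSub (r : R) {e : S} {m : P} (hm : m ∈ peSub S P e) : r • m ∈ peSub S P e := by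
  obtain ⟨x, rfl⟩ := hm
  exact ⟨r • x, (smul_comm r (op e) x).symm⟩

theorem op_smul_eq_self_of_mem_peSub {e : S} (he : e * e = e) {m : P} (hm : m ∈ peSub S P e) :
    op e • m = m := by
  obtain ⟨x, rfl⟩ := hm
  show op e • op e • x = op e • x
  rw [← LMod.mul_smul', ← op_mul, he]

variable (R) in
def peProj (e : S) : LinMap R P (peSub S P e) :=
  ⟨fun x => ⟨op e • x, x, rfl⟩,
   fun x y => Subtype.ext (LMod.smul_add' _ x y),
   fun r x => Subtype.ext (smul_comm r (op e) x).symm⟩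

theorem peProj_surjective (e : S) : Function.Surjective (peProj R (P := P) e).1 :=
  fun ⟨_, x, rfl⟩ => ⟨x, rfl⟩

theorem peProj_op_smul {e : S} (he : e * e = e) (x : P) :
    (peProj R e).1 (op e • x) = (peProj R e).1 x :=
  Subtype.ext (op_smul_eq_self_of_mem_peSub he ⟨x, rfl⟩)

def peObj (hP : IsUnitary R P) (e : S) : UMod.{u, u} R :=
  ⟨peSub S P e, hP.of_surjective (peProj R e).2 (peProj_surjective e)⟩

def linCombPe {e : S} (ζ : Finset P) (hζ : ∀ t ∈ ζ, t ∈ peSub S P e) :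
    LinMap R (ζ → R) (peSub S P e) :=
  ⟨fun w => ⟨linComb R ζ w, AddSubgroup.sum_mem _ fun t _ => smul_mem_peSub (w t) (hζ t t.2)⟩,
   fun w w' => Subtype.ext (map_add _ w w'),
   fun r w => Subtype.ext (linComb_smul ζ r w)⟩

theorem linCombPe_surjective {e : S} {ζ : Finset P} (hζ : ∀ t ∈ ζ, t ∈ peSub S P e)
    (hspan : peSub S P e ≤ rspan R ζ) : Function.Surjective (linCombPe (R := R) ζ hζ).1 :=
  fun m =>
    let ⟨w, hw⟩ := rspan_le_range_linComb ζ (hspan m.2)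
    ⟨w, Subtype.ext hw⟩

end PeSub

section TraceAnnihilator

variable (R S : Type u) [NonUnitalRing R] [NonUnitalRing S] (P : Type u) [AddCommGroup P]
  [LMod R P] [LMod Sᵐᵒᵖ P] [SMulCommClass R Sᵐᵒᵖ P]

def traceAnnihilator (N : Type v) [AddCommGroup N] [LMod R N] : AddSubgroup N where
  carrier := {n | ∀ β ∈ umax S (LinMap R P R), ∀ x : P, β.1 x • n = 0}
  zero_mem' _ _ _ := LMod.smul_zero' _
  add_mem' ha hb β hβ x := by rw [LMod.smul_add', ha β hβ x, hb β hβ x, add_zero]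
  neg_mem' ha β hβ x := by rw [LMod.smul_neg', ha β hβ x, neg_zero]

def HasLocalDualBases : Prop :=
  ∀ e : S, e * e = e → ∃ (ζ : Finset P) (b : ζ → LinMap R P R),
    (∀ t, b t ∈ umax S (LinMap R P R)) ∧ ∀ x : P, op e • x = ∑ t, (b t).1 x • (t : P)

variable {R S P} {N : Type u} [AddCommGroup N] [LMod R N]

theorem smul_mem_traceAnnihilator (r : R) {n : N} (hn : n ∈ traceAnnihilator R S P N) :
    r • n ∈ traceAnnihilator R S P N := fun β hβ x => by
  rw [← LMod.mul_smul']
  exact hn (op r • β) (umax_stable (op r) hβ) x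

theorem gammaFun_eq_zero_iff {n : N} :
    gammaFun R S P N n = 0 ↔ n ∈ traceAnnihilator R S P N := by
  refine ⟨fun h β hβ x => ?_, fun h => ?_⟩
  · exact congrArg (fun Ψ : LinMap S (GP R S P) (SHom R S P N) => (Ψ.1 ⟨β, hβ⟩).1.1 x) h
  · exact LinMap.ext (funext fun β => Subtype.ext (LinMap.ext (funext fun x => h β.1 β.2 x)))

theorem map_mem_traceAnnihilator_of_sHomZero {X : Type u} [AddCommGroup X] [LMod R X]
    (hX : sHomZero R S P X) (f : LinMap R X N) (w : X) :
    f.1 w ∈ traceAnnihilator R S P N := fun β hβ y => by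
  rw [← f.2.map_smul]
  show f.1 ((gammaInner w β).1 y) = 0
  rw [hX _ (gammaInner_mem w hβ)]
  exact f.2.map_zero

theorem smul_eq_zero_of_forall_mem_traceAnnihilator [HasLocalUnits S]
    (hP : HasLocalDualBases R S P) (s : S) (g : LinMap R P N)
    (hg : ∀ x, g.1 x ∈ traceAnnihilator R S P N) : s • g = 0 := by
  obtain ⟨e, he, hse⟩ := HasLocalUnits.exists_unit {s}
  obtain ⟨ζ, b, hb, hdual⟩ := hP e he
  have hs : ∀ x : P, op s • x = op e • op s • x := fun x => by
    rw [← LMod.mul_smul', ← op_mul, (hse s (Finset.mem_singleton_self s)).2]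
  refine LinMap.ext (funext fun x => ?_)
  show g.1 (op s • x) = 0
  rw [hs, hdual, g.2.map_sum]
  exact Finset.sum_eq_zero fun t _ => by rw [g.2.map_smul]; exact hg t (b t) (hb t) _

theorem eq_zero_of_mem_traceAnnihilator [HasLocalUnits S] (hP : HasLocalDualBases R S P)
    (hst : stPZero R S P N) {n : N} (hn : n ∈ traceAnnihilator R S P N) : n = 0 :=
  hst _ (fun r _ => smul_mem_traceAnnihilator r)
    (fun s g hg => smul_eq_zero_of_forall_mem_traceAnnihilator hP s g hg) n hn

end TraceAnnihilator

section EndSubring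

variable {R : Type u} [NonUnitalRing R] {P : Type u} [AddCommGroup P] [LMod R P]
  {S : NonUnitalSubring (LinMap R P P)} [LMod (↥S)ᵐᵒᵖ P]

theorem exists_finset_peSub_le_rspan (hP : IsUnitary R P)
    (hact : ∀ (s : ↥S) (x : P), (MulOpposite.op s) • x = (s : LinMap R P P).1 x)
    (hfg : ∀ f : LinMap R P P, f ∈ S → f * f = f → IsFGSet R (Set.range f.1))
    {e : ↥S} (he : e * e = e) :
    ∃ ζ : Finset P, (∀ t ∈ ζ, t ∈ peSub (↥S) P e) ∧ peSub (↥S) P e ≤ rspan R ζ := by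
  obtain ⟨ζ, hζ, hspan⟩ := hfg e e.2 (congrArg Subtype.val he)
  refine ⟨ζ, fun t ht => ?_, ?_⟩
  · obtain ⟨x, rfl⟩ := hζ ht
    exact ⟨x, hact e x⟩
  · rintro _ ⟨x, rfl⟩
    show op e • x ∈ _
    rw [hact e x]
    exact (e : LinMap R P P).2.map_mem_rspan hP (fun y => hspan _ ⟨y, rfl⟩) x

theorem peObj_projective [SMulCommClass R (↥S)ᵐᵒᵖ P] (hlp : IsLocallyProjective R P)
    (hact : ∀ (s : ↥S) (x : P), (MulOpposite.op s) • x = (s : LinMap R P P).1 x)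
    (hfg : ∀ f : LinMap R P P, f ∈ S → f * f = f → IsFGSet R (Set.range f.1))
    {e : ↥S} (he : e * e = e) : Projective (peObj hlp.isUnitary e) := by
  obtain ⟨ι, rel, -, -, hne, hdir, D, c, hD⟩ := id hlp
  obtain ⟨ζ, -, hspan⟩ := exists_finset_peSub_le_rspan c.isUnitary hact hfg he
  obtain ⟨i, hi⟩ := c.exists_finset_subset_range hne hdir ζ
  obtain ⟨u, hu⟩ := LinMap.exists_lift_of_injective (c.incl i) (c.incl_injective i)
    (M := peSub (↥S) P e) ⟨Subtype.val, fun _ _ => rfl, fun _ _ => rfl⟩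
    fun m => (c.incl i).2.rspan_le_range hi (hspan m.2)
  have := (hD i).2
  refine Retract.projective (Y := D.obj i) ⟨u, (peProj R e).comp (c.incl i), ?_⟩
  refine LinMap.ext (funext fun m => Subtype.ext ?_)
  exact (congrArg (op e • ·) (hu m)).trans (op_smul_eq_self_of_mem_peSub he m.2)

theorem hasLocalDualBases [HasLocalUnits R] [SMulCommClass R (↥S)ᵐᵒᵖ P]
    (hlp : IsLocallyProjective R P)
    (hact : ∀ (s : ↥S) (x : P), (MulOpposite.op s) • x = (s : LinMap R P P).1 x)
    (hfg : ∀ f : LinMap R P P, f ∈ S → f * f = f → IsFGSet R (Set.range f.1)) :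
    HasLocalDualBases R (↥S) P := by
  intro e he
  obtain ⟨ζ, hζ, hspan⟩ := exists_finset_peSub_le_rspan hlp.isUnitary hact hfg he
  let θ : UMod.free ζ ⟶ peObj hlp.isUnitary e := linCombPe ζ hζ
  have : Epi θ := UMod.epi_of_surjective θ (linCombPe_surjective hζ hspan)
  have : Projective (peObj hlp.isUnitary e) := peObj_projective hlp hact hfg he
  let σ := Projective.factorThru (𝟙 _) θ
  have hσ : ∀ m, linComb R ζ (σ.1 m) = m.1 := fun m =>
    congrArg Subtype.val (congrFun (congrArg Subtype.val (Projective.factorThru_comp (𝟙 _) θ)) m)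
  let b : ζ → LinMap R P R := fun t => (LinMap.proj t).comp (σ.comp (peProj R e))
  refine ⟨ζ, b, fun t => ?_, fun x => (hσ ((peProj R e).1 x)).symm⟩
  have hb : b t = e • b t := LinMap.ext (funext fun x =>
    congrArg (fun m => σ.1 m t) (peProj_op_smul he x).symm)
  rw [hb]
  exact smul_mem_umax e (b t)

theorem exists_op_smul_eq_gammaInner [SMulCommClass R (↥S)ᵐᵒᵖ P]
    (hact : ∀ (s : ↥S) (x : P), (MulOpposite.op s) • x = (s : LinMap R P P).1 x)
    (hSEnd : ((AddSubgroup.closure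
        {h : LinMap R P P | ∃ s ∈ S, ∃ g : LinMap R P P, h = s * g} :
        AddSubgroup (LinMap R P P)) : Set (LinMap R P P)) = ↑S)
    {β : LinMap R P R} (hβ : β ∈ umax (↥S) (LinMap R P R)) (x : P) :
    ∃ s : ↥S, ∀ y, op s • y = (gammaInner x β).1 y := by
  have hmem : gammaInner x β ∈ S := by
    refine (Set.ext_iff.mp hSEnd _).mp (AddSubgroup.closure_mono ?_ (gammaInner_mem x hβ))
    rintro _ ⟨s, g, rfl⟩
    exact ⟨s, s.2, g, LinMap.ext (funext fun y => congrArg g.1 (hact s y))⟩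
  exact ⟨⟨_, hmem⟩, hact _⟩

end EndSubring

section Gamma

variable {R S : Type u} [NonUnitalRing R] [NonUnitalRing S] {P : Type u} [AddCommGroup P]
  [LMod R P] [LMod Sᵐᵒᵖ P] [SMulCommClass R Sᵐᵒᵖ P]
  {N : Type u} [AddCommGroup N] [LMod R N]

theorem gammaFun_isLHom : IsLHom R (gammaFun R S P N) :=
  ⟨fun n n' => LinMap.ext (funext fun β => Subtype.ext (LinMap.ext (funext fun x =>
      LMod.smul_add' _ n n'))),
   fun r n => LinMap.ext (funext fun β => Subtype.ext (LinMap.ext (funext fun x =>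
      (LMod.mul_smul' _ r n).symm)))⟩

theorem gammaFun_mem_umax (hN : IsUnitary R N) (n : N) :
    gammaFun R S P N n ∈ umax R (LinMap S (GP R S P) (SHom R S P N)) :=
  umax_mapsTo _ gammaFun_isLHom.map_add gammaFun_isLHom.map_smul (hN n)

theorem gammaFun_injective [HasLocalUnits S] (hP : HasLocalDualBases R S P)
    (hst : stPZero R S P N) : Function.Injective (gammaFun R S P N) :=
  (injective_iff_map_eq_zero gammaFun_isLHom.toAddMonoidHom).mpr fun _ hn =>
    eq_zero_of_mem_traceAnnihilator hP hst (gammaFun_eq_zero_iff.mp hn)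

variable (R S P)

def traceIdeal : AddSubgroup R :=
  AddSubgroup.closure {r | ∃ (β : GP R S P) (x : P), r = β.1.1 x}

theorem smul_mem_traceIdeal (r : R) {t : R} (ht : t ∈ traceIdeal R S P) :
    r • t ∈ traceIdeal R S P :=
  closure_smul_stable (by
    rintro r' _ ⟨β, x, rfl⟩
    exact AddSubgroup.subset_closure ⟨β, r' • x, (β.1.2.map_smul r' x).symm⟩) r ht

instance : LMod R ↥(traceIdeal R S P) where
  smul r t := ⟨r • t.1, smul_mem_traceIdeal R S P r t.2⟩
  smul_add' r t t' := Subtype.ext (LMod.smul_add' r t.1 t'.1)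
  add_smul' r r' t := Subtype.ext (LMod.add_smul' r r' t.1)
  mul_smul' r r' t := Subtype.ext (LMod.mul_smul' r r' t.1)

def traceIdealObj [HasLocalUnits R] : UMod.{u, u} R :=
  ⟨traceIdeal R S P, IsUnitary.of_forall_exists_smul_eq fun t =>
    let ⟨e, he⟩ := HasLocalUnits.exists_left_unit {t.1}
    ⟨e, Subtype.ext (he t.1 (Finset.mem_singleton_self _))⟩⟩

def traceIdealIncl [HasLocalUnits R] : traceIdealObj R S P ⟶ UMod.regular :=
  ⟨Subtype.val, fun _ _ => rfl, fun _ _ => rfl⟩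

instance [HasLocalUnits R] : Mono (traceIdealIncl R S P) :=
  UMod.mono_of_injective _ Subtype.val_injective

variable {R S P}

def traceGraph (Φ : LinMap S (GP R S P) (SHom R S P N)) : AddSubgroup (R × N) :=
  AddSubgroup.closure {p | ∃ (β : GP R S P) (x : P), p = (β.1.1 x, (Φ.1 β).1.1 x)}

variable (Φ : LinMap S (GP R S P) (SHom R S P N))

theorem smul_mem_traceGraph (r : R) {p : R × N} (hp : p ∈ traceGraph Φ) :
    r • p ∈ traceGraph Φ :=
  closure_smul_stable (by
    rintro r' _ ⟨β, x, rfl⟩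
    exact AddSubgroup.subset_closure ⟨β, r' • x,
      Prod.ext (β.1.2.map_smul r' x).symm ((Φ.1 β).1.2.map_smul r' x).symm⟩) r hp

theorem traceIdeal_le_map_fst_traceGraph :
    traceIdeal R S P ≤ (traceGraph Φ).map (AddMonoidHom.fst R N) :=
  (AddSubgroup.closure_le _).mpr fun _ ⟨β, x, hr⟩ =>
    ⟨_, AddSubgroup.subset_closure ⟨β, x, rfl⟩, hr.symm⟩

theorem map_op_smul_eq_gammaFun_of_mem_traceGraph
    (hS : ∀ β ∈ umax S (LinMap R P R), ∀ x : P, ∃ s : S, ∀ y, op s • y = (gammaInner x β).1 y)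
    {p : R × N} (hp : p ∈ traceGraph Φ) (β' : GP R S P) :
    Φ.1 (op p.1 • β') = (gammaFun R S P N p.2).1 β' := by
  let L : R × N →+ SHom R S P N := AddMonoidHom.mk'
    (fun q => Φ.1 (op q.1 • β') - (gammaFun R S P N q.2).1 β') fun q q' => by
      rw [Prod.fst_add, Prod.snd_add, MulOpposite.op_add, LMod.add_smul', Φ.2.map_add,
        gammaFun_isLHom.map_add, LinMap.add_apply]
      abel
  suffices p ∈ L.ker from sub_eq_zero.mp this
  refine (AddSubgroup.closure_le L.ker).mpr ?_ hp
  rintro _ ⟨β, x, rfl⟩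
  -- `(y)β'·(x)β = ((y)β'·x)β`, and `y ↦ (y)β'·x` is the action of some `s ∈ S`
  obtain ⟨s, hs⟩ := hS β'.1 β'.2 x
  have hβ : op (β.1.1 x) • β' = s • β := Subtype.ext (LinMap.ext (funext fun y => by
    show β'.1.1 y * β.1.1 x = β.1.1 (op s • y)
    rw [hs y]
    exact (β.1.2.map_smul _ x).symm))
  show Φ.1 (op (β.1.1 x) • β') - (gammaFun R S P N _).1 β' = 0
  rw [hβ, Φ.2.map_smul, sub_eq_zero]
  refine Subtype.ext (LinMap.ext (funext fun y => ?_))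
  show (Φ.1 β).1.1 (op s • y) = β'.1.1 y • (Φ.1 β).1.1 x
  rw [hs y]
  exact (Φ.1 β).1.2.map_smul _ x

theorem eq_zero_of_zero_mem_traceGraph [HasLocalUnits S] (hP : HasLocalDualBases R S P)
    (hS : ∀ β ∈ umax S (LinMap R P R), ∀ x : P, ∃ s : S, ∀ y, op s • y = (gammaInner x β).1 y)
    (hst : stPZero R S P N) {n : N} (hn : ((0 : R), n) ∈ traceGraph Φ) : n = 0 := by
  refine gammaFun_injective hP hst (LinMap.ext (funext fun β => ?_))
  rw [← map_op_smul_eq_gammaFun_of_mem_traceGraph Φ hS hn β, gammaFun_isLHom.map_zero]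
  show Φ.1 (op 0 • β) = 0
  rw [MulOpposite.op_zero, LMod.zero_smul', Φ.2.map_zero]

end Gamma

theorem exists_gammaFun_eq {R S : Type u} [NonUnitalRing R] [NonUnitalRing S] [HasLocalUnits R]
    [HasLocalUnits S] {P : Type u} [AddCommGroup P] [LMod R P] [LMod Sᵐᵒᵖ P]
    [SMulCommClass R Sᵐᵒᵖ P] {N : UMod.{u, u} R} [Injective N] (hP : HasLocalDualBases R S P)
    (hS : ∀ β ∈ umax S (LinMap R P R), ∀ x : P, ∃ s : S, ∀ y, op s • y = (gammaInner x β).1 y)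
    (hst : stPZero R S P N.carrier) {Φ : LinMap S (GP R S P) (SHom R S P N.carrier)}
    (hΦ : Φ ∈ umax R (LinMap S (GP R S P) (SHom R S P N.carrier))) :
    ∃ n, gammaFun R S P N.carrier n = Φ := by
  obtain ⟨u, hu⟩ := exists_smul_eq_self_of_mem_umax hΦ
  obtain ⟨δ, hδ⟩ := exists_linMap_of_graph (traceIdeal R S P) (fun _ _ => rfl) (traceGraph Φ)
    (smul_mem_traceGraph Φ) (fun _ => eq_zero_of_zero_mem_traceGraph Φ hP hS hst)
    fun t ht =>
      let ⟨p, hp, hpt⟩ := traceIdeal_le_map_fst_traceGraph Φ ht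
      ⟨p.2, hpt ▸ hp⟩
  let δ' : traceIdealObj R S P ⟶ N := δ
  let δR := Injective.factorThru δ' (traceIdealIncl R S P)
  have hδR : ∀ t : traceIdeal R S P, δR.1 t.1 = δ.1 t := fun t =>
    congrFun (congrArg Subtype.val (Injective.comp_factorThru δ' (traceIdealIncl R S P))) t
  refine ⟨δR.1 u, LinMap.ext (funext fun β => Subtype.ext (LinMap.ext (funext fun x => ?_)))⟩
  have hgen : ((op u • β).1.1 x, (Φ.1 (op u • β)).1.1 x) ∈ traceGraph Φ :=
    AddSubgroup.subset_closure ⟨op u • β, x, rfl⟩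
  calc β.1.1 x • δR.1 u = δR.1 ((op u • β).1.1 x) := (δR.2.map_smul _ u).symm
    _ = (Φ.1 (op u • β)).1.1 x :=
      (hδR ⟨_, AddSubgroup.subset_closure ⟨op u • β, x, rfl⟩⟩).trans (hδ _ _ hgen)
    _ = (Φ.1 β).1.1 x := congrArg (fun Ψ : LinMap _ _ _ => (Ψ.1 β).1.1 x) hu

theorem hom_vanishing_and_gamma_iso_general
    (R : Type u) [NonUnitalRing R] [HasLocalUnits R]
    (P : Type u) [AddCommGroup P] [LMod R P]
    (hlp : IsLocallyProjective R P)
    (S : NonUnitalSubring (LinMap R P P)) [HasLocalUnits ↥S]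
    [LMod (↥S)ᵐᵒᵖ P] [SMulCommClass R (↥S)ᵐᵒᵖ P]
    (hact : ∀ (s : ↥S) (x : P), (MulOpposite.op s) • x = (s : LinMap R P P).1 x)
    (hSEnd : ((AddSubgroup.closure
        {h : LinMap R P P | ∃ s ∈ S, ∃ g : LinMap R P P, h = s * g} :
        AddSubgroup (LinMap R P P)) : Set (LinMap R P P)) = ↑S)
    (hfg : ∀ f : LinMap R P P, f ∈ S → f * f = f → IsFGSet R (Set.range f.1))
    (N : UMod.{u, u} R) (hst : stPZero R ↥S P N.carrier) :
    -- (a):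
    (∀ X : UMod.{u, u} R, sHomZero R ↥S P X.carrier →
      ∀ f : LinMap R X.carrier N.carrier, f = 0) ∧
    -- (b):
    (CategoryTheory.Injective N →
      ∃ h : ∀ n : N.carrier, gammaFun R ↥S P N.carrier n ∈
          umax R (LinMap ↥S (GP R ↥S P) (SHom R ↥S P N.carrier)),
        Function.Bijective (fun n : N.carrier =>
          (⟨gammaFun R ↥S P N.carrier n, h n⟩ : RHomG R ↥S P (SHom R ↥S P N.carrier)))) := by
  have hP := hasLocalDualBases hlp hact hfg
  have hS := fun β hβ x => exists_op_smul_eq_gammaInner hact hSEnd (β := β) hβ x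
  refine ⟨fun X hX f => LinMap.ext (funext fun w =>
      eq_zero_of_mem_traceAnnihilator hP hst (map_mem_traceAnnihilator_of_sHomZero hX f w)),
    fun _ => ⟨gammaFun_mem_umax N.unitary,
      fun n n' h => gammaFun_injective hP hst (congrArg Subtype.val h), fun Φ => ?_⟩⟩
  obtain ⟨n, hn⟩ := exists_gammaFun_eq hP hS hst Φ.2
  exact ⟨n, Subtype.ext hn⟩

theorem hom_vanishing_and_gamma_iso
    (R : Type u) [NonUnitalRing R] [HasLocalUnits R]
    (P : Type u) [AddCommGroup P] [LMod R P]
    (hPu : IsUnitary R P)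
    (hlp : IsLocallyProjective R P)
    (S : NonUnitalSubring (LinMap R P P)) [HasLocalUnits ↥S]
    [LMod (↥S)ᵐᵒᵖ P] [SMulCommClass R (↥S)ᵐᵒᵖ P]
    (hact : ∀ (s : ↥S) (x : P), (MulOpposite.op s) • x = (s : LinMap R P P).1 x)
    (hPS : IsUnitary (↥S)ᵐᵒᵖ P)
    (hSEnd : ((AddSubgroup.closure
        {h : LinMap R P P | ∃ s ∈ S, ∃ g : LinMap R P P, h = s * g} :
        AddSubgroup (LinMap R P P)) : Set (LinMap R P P)) = ↑S)
    (hfg : ∀ f : LinMap R P P, f ∈ S → f * f = f → IsFGSet R (Set.range f.1))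
    (N : UMod.{u, u} R) (hst : stPZero R ↥S P N.carrier) :
    -- (a):
    (∀ X : UMod.{u, u} R, sHomZero R ↥S P X.carrier →
      ∀ f : LinMap R X.carrier N.carrier, f = 0) ∧
    -- (b):
    (CategoryTheory.Injective N →
      ∃ h : ∀ n : N.carrier, gammaFun R ↥S P N.carrier n ∈
          umax R (LinMap ↥S (GP R ↥S P) (SHom R ↥S P N.carrier)),
        Function.Bijective (fun n : N.carrier =>
          (⟨gammaFun R ↥S P N.carrier n, h n⟩ : RHomG R ↥S P (SHom R ↥S P N.carrier)))) :=
  hom_vanishing_and_gamma_iso_general R P hlp S hact hSEnd hfg N hst
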